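/- arXiv:2302.09017 — 2 statements merged into one kernel-verified Lean document; each statement's English description precedes it below -/
import Mathlib

section
/- Fix a positive integer m and ε > 0, and let p = 1/2. Then the sequence a_n = C(n, l_n) · (1 − 2^{−m l_n})^{C(n − l_n, m)}, where l_n = ⌊(1 − ε/m) log₂ n⌋, tends to 0 as n → ∞. -/
open Filter
open Real

private lemma aux_tendsto (ε K : ℝ) (hε : 0 < ε) (hK : 0 < K) :
    Tendsto (fun n : ℕ => Real.exp ((Real.log n)^2 / Real.log 2 - (n:ℝ)^ε / K))
      atTop (nhds 0) := by
  have hlog2 : (0:ℝ) < Real.log 2 := Real.log_pos (by norm_num)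
  have h1 : Tendsto (fun x : ℝ => (Real.log x)^2 / Real.log 2 - x^ε / K) atTop atBot := by
    have hlo := (isLittleO_log_rpow_rpow_atTop (2:ℝ) hε).def
      (show (0:ℝ) < Real.log 2 / (2*K) by positivity)
    have h2 : Tendsto (fun x : ℝ => -(x^ε / (2*K))) atTop atBot :=
      tendsto_neg_atTop_atBot.comp ((tendsto_rpow_atTop hε).atTop_div_const (by positivity))
    refine tendsto_atBot_mono' _ ?_ h2
    filter_upwards [hlo, eventually_ge_atTop (1:ℝ),
      Real.tendsto_log_atTop.eventually_ge_atTop 0] with x hx hx1 hlx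
    have hxε : (0:ℝ) ≤ x ^ ε := Real.rpow_nonneg (by linarith) ε
    have h3 : (Real.log x)^2 ≤ Real.log 2 / (2*K) * x^ε := by
      rw [Real.norm_eq_abs, Real.norm_eq_abs, abs_of_nonneg (Real.rpow_nonneg hlx 2),
        abs_of_nonneg hxε] at hx
      calc (Real.log x)^2 = Real.log x ^ (2:ℝ) := by
            rw [← Real.rpow_natCast (Real.log x) 2]; norm_num
        _ ≤ Real.log 2 / (2*K) * x^ε := hx
    have h4 : (Real.log x)^2 / Real.log 2 ≤ x^ε / (2*K) := by
      rw [div_le_div_iff₀ hlog2 (by positivity)]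
      calc (Real.log x)^2 * (2*K) ≤ (Real.log 2 / (2*K) * x^ε) * (2*K) := by
            apply mul_le_mul_of_nonneg_right h3 (by positivity)
        _ = x ^ ε * Real.log 2 := by field_simp
    have h5 : x^ε/(2*K) - x^ε/K = -(x^ε/(2*K)) := by ring
    linarith
  exact Real.tendsto_exp_atBot.comp (h1.comp tendsto_natCast_atTop_atTop)

/-- for fixed `m ≥ 1` and `ε > 0`, with `l_n = ⌊(1 - ε/m) log₂ n⌋`, the
sequence `C(n, l_n) * (1 - 2^{-m l_n})^{C(n - l_n, m)}` tends to `0`. -/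
theorem vanishing_bound_half (m : ℕ) (hm : 0 < m) (ε : ℝ) (hε : 0 < ε) :
    Tendsto (fun n : ℕ =>
      (n.choose ⌊(1 - ε / m) * Real.logb 2 n⌋₊ : ℝ) *
        (1 - (2 : ℝ) ^ (-((m : ℝ) * ⌊(1 - ε / m) * Real.logb 2 n⌋₊))) ^
          ((n - ⌊(1 - ε / m) * Real.logb 2 n⌋₊).choose m))
      atTop (nhds 0) := by
  set l : ℕ → ℕ := fun n => ⌊(1 - ε / m) * Real.logb 2 n⌋₊ with hl
  by_cases hδ : (1:ℝ) - ε / m ≤ 0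
  · -- degenerate case: l n = 0 eventually, factor is 0
    refine Tendsto.congr' ?_
      (tendsto_const_nhds : Tendsto (fun _ : ℕ => (0:ℝ)) atTop (nhds 0))
    filter_upwards [eventually_ge_atTop (max m 1)] with n hn
    have hn1 : (1:ℕ) ≤ n := le_trans (le_max_right m 1) hn
    have hnm : m ≤ n := le_trans (le_max_left m 1) hn
    have hlogb : (0:ℝ) ≤ Real.logb 2 n := Real.logb_nonneg (by norm_num) (by exact_mod_cast hn1)
    have hl0 : l n = 0 := Nat.floor_eq_zero.2
      (lt_of_le_of_lt (mul_nonpos_of_nonpos_of_nonneg hδ hlogb) one_pos)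
    show (0:ℝ) = (n.choose (l n) : ℝ) *
      (1 - (2:ℝ) ^ (-((m:ℝ) * (l n : ℕ)))) ^ ((n - l n).choose m)
    rw [hl0]
    simp only [Nat.choose_zero_right, Nat.cast_zero, mul_zero, neg_zero, Real.rpow_zero,
      sub_self, Nat.cast_one, one_mul, Nat.sub_zero]
    exact (zero_pow (M₀ := ℝ) (Nat.choose_pos hnm).ne').symm
  · push_neg at hδ
    have hm0 : (0:ℝ) < m := by exact_mod_cast hm
    have hδ1 : (1:ℝ) - ε / m < 1 := by
      have : 0 < ε / m := div_pos hε hm0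
      linarith
    set K : ℝ := 2 ^ m * (m.factorial : ℝ) with hK
    have hK0 : 0 < K := by positivity
    have hlog2 : (0:ℝ) < Real.log 2 := Real.log_pos (by norm_num)
    refine squeeze_zero' ?_ ?_ (aux_tendsto ε K hε hK0)
    · filter_upwards [eventually_ge_atTop 1] with n hn
      have h1 : (0:ℝ) ≤ 1 - (2:ℝ) ^ (-((m:ℝ) * l n)) := by
        have : (2:ℝ) ^ (-((m:ℝ) * l n)) ≤ 1 :=
          Real.rpow_le_one_of_one_le_of_nonpos (by norm_num)
            (neg_nonpos.2 (by positivity))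
        linarith
      positivity
    · -- main estimate
      have hcond : ∀ᶠ x : ℝ in atTop, Real.logb 2 x + m ≤ x / 2 := by
        have hlo := isLittleO_log_id_atTop.def
          (show (0:ℝ) < Real.log 2 / 4 by positivity)
        filter_upwards [hlo, eventually_ge_atTop (1:ℝ), eventually_ge_atTop (4*(m:ℝ))]
          with x hx hx1 hxm
        simp only [id] at hx
        rw [Real.norm_eq_abs, Real.norm_eq_abs, abs_of_nonneg (Real.log_nonneg hx1),
          abs_of_nonneg (by linarith : (0:ℝ) ≤ x)] at hx
        have hb : Real.logb 2 x ≤ x / 4 := by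
          rw [Real.logb, div_le_iff₀ hlog2]
          calc Real.log x ≤ Real.log 2 / 4 * x := hx
            _ = x / 4 * Real.log 2 := by ring
        have : (m:ℝ) ≤ x / 4 := by linarith
        linarith
      filter_upwards [eventually_ge_atTop 2, tendsto_natCast_atTop_atTop.eventually hcond]
        with n hn2 hcn
      have hn1 : (1:ℝ) ≤ n := by exact_mod_cast le_trans one_le_two hn2
      have hn0 : (0:ℝ) < n := lt_of_lt_of_le one_pos hn1
      have hlogb : (0:ℝ) ≤ Real.logb 2 n := Real.logb_nonneg (by norm_num) hn1
      set L : ℕ := l n with hLdef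
      have hLle : (L:ℝ) ≤ (1 - ε / m) * Real.logb 2 n :=
        Nat.floor_le (by positivity)
      have hLle' : (L:ℝ) ≤ Real.logb 2 n :=
        hLle.trans (by nlinarith)
      -- first factor
      have hA : (n.choose L : ℝ) ≤ Real.exp ((Real.log n)^2 / Real.log 2) := by
        calc (n.choose L : ℝ) ≤ ((n:ℝ))^(L:ℕ) := by exact_mod_cast Nat.choose_le_pow n L
          _ = (n:ℝ) ^ ((L:ℕ):ℝ) := (Real.rpow_natCast _ _).symm
          _ = Real.exp (Real.log n * L) := Real.rpow_def_of_pos hn0 _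
          _ ≤ Real.exp (Real.log n * Real.logb 2 n) := by
              apply Real.exp_le_exp.2
              exact mul_le_mul_of_nonneg_left hLle' (Real.log_nonneg hn1)
          _ = Real.exp ((Real.log n)^2 / Real.log 2) := by
              rw [Real.logb]; ring_nf
      -- second factor
      set x : ℝ := (2:ℝ) ^ (-((m:ℝ) * L)) with hxdef
      have hx0 : 0 < x := Real.rpow_pos_of_pos (by norm_num) _
      have hx1 : x ≤ 1 := Real.rpow_le_one_of_one_le_of_nonpos (by norm_num)
        (neg_nonpos.2 (by positivity))
      set N : ℕ := (n - L).choose m with hNdef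
      have hB : (1 - x) ^ N ≤ Real.exp (-(x * N)) := by
        calc (1 - x) ^ N ≤ (Real.exp (-x)) ^ N := by
              apply pow_le_pow_left₀ (by linarith)
              linarith [Real.add_one_le_exp (-x)]
          _ = Real.exp (-(x * N)) := by
              rw [← Real.exp_nat_mul]; ring_nf
      -- lower bound on x
      have hxlow : (n:ℝ) ^ (-((m:ℝ) - ε)) ≤ x := by
        have hmL : (m:ℝ) * L ≤ ((m:ℝ) - ε) * Real.logb 2 n := by
          have h1 : (m:ℝ) * L ≤ (m:ℝ) * ((1 - ε / m) * Real.logb 2 n) :=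
            mul_le_mul_of_nonneg_left hLle (le_of_lt hm0)
          have h2 : (m:ℝ) * ((1 - ε / m) * Real.logb 2 n) = ((m:ℝ) - ε) * Real.logb 2 n := by
            field_simp
          linarith
        calc (n:ℝ) ^ (-((m:ℝ) - ε))
            = ((2:ℝ) ^ Real.logb 2 (n:ℝ)) ^ (-((m:ℝ) - ε)) := by
              rw [Real.rpow_logb (by norm_num) (by norm_num) hn0]
          _ = (2:ℝ) ^ (Real.logb 2 (n:ℝ) * (-((m:ℝ) - ε))) :=
              (Real.rpow_mul (by norm_num) _ _).symm
          _ ≤ x := by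
              apply Real.rpow_le_rpow_of_exponent_le (by norm_num)
              nlinarith
      -- lower bound on N
      have hLm : (L:ℝ) + m ≤ (n:ℝ) / 2 := by linarith [hcn, hLle']
      have hLmn : L + m ≤ n := by
        have : ((L + m : ℕ) : ℝ) ≤ (n:ℝ) := by push_cast; linarith
        exact_mod_cast this
      have hNge : ((n:ℝ)/2)^m / (m.factorial : ℝ) ≤ (N:ℝ) := by
        have key := Nat.pow_le_choose (α := ℝ) m (n - L)
        have heq : n - L + 1 - m = n - (L + m) + 1 := by omega
        have hcast : ((n - (L + m) + 1 : ℕ) : ℝ) = (n:ℝ) - (L + m) + 1 := by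
          push_cast [Nat.cast_sub hLmn]; ring
        have hge : (n:ℝ)/2 ≤ ((n - L + 1 - m : ℕ) : ℝ) := by
          rw [heq, hcast]; push_cast; linarith
        calc ((n:ℝ)/2)^m / (m.factorial : ℝ)
            ≤ (((n - L + 1 - m : ℕ) : ℝ))^m / (m.factorial : ℝ) := by
              apply div_le_div_of_nonneg_right ?_ (by positivity)
              exact pow_le_pow_left₀ (by positivity) hge m
          _ ≤ (N:ℝ) := key
      -- combine: x * N ≥ n^ε / K
      have hxN : (n:ℝ)^ε / K ≤ x * N := by
        have h1 : (n:ℝ) ^ (-((m:ℝ) - ε)) * (((n:ℝ)/2)^m / (m.factorial : ℝ)) ≤ x * N := by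
          apply mul_le_mul hxlow hNge (by positivity) (le_of_lt hx0)
        have h2 : (n:ℝ) ^ (-((m:ℝ) - ε)) * (((n:ℝ)/2)^m / (m.factorial : ℝ))
            = (n:ℝ)^ε / K := by
          rw [div_pow, hK]
          have hne : (n:ℝ) ^ ((m:ℕ):ℝ) = (n:ℝ)^(m:ℕ) := Real.rpow_natCast _ _
          have hadd : (n:ℝ) ^ (-((m:ℝ) - ε)) * (n:ℝ) ^ ((m:ℕ):ℝ) = (n:ℝ)^ε := by
            rw [← Real.rpow_add hn0]; congr 1; push_cast; ring
          calc (n:ℝ) ^ (-((m:ℝ) - ε)) * ((n:ℝ)^m / 2^m / (m.factorial:ℝ))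
              = ((n:ℝ) ^ (-((m:ℝ) - ε)) * (n:ℝ)^((m:ℕ):ℝ)) / (2^m * (m.factorial:ℝ)) := by
                rw [hne]; ring
            _ = (n:ℝ)^ε / (2^m * (m.factorial:ℝ)) := by rw [hadd]
        linarith
      -- final combination
      calc (n.choose L : ℝ) * (1 - x) ^ N
          ≤ Real.exp ((Real.log n)^2 / Real.log 2) * Real.exp (-(x * N)) := by
            exact mul_le_mul hA hB (pow_nonneg (by linarith) N) (le_of_lt (Real.exp_pos _))
        _ ≤ Real.exp ((Real.log n)^2 / Real.log 2) * Real.exp (-((n:ℝ)^ε / K)) := by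
            apply mul_le_mul_of_nonneg_left ?_ (le_of_lt (Real.exp_pos _))
            exact Real.exp_le_exp.2 (by linarith)
        _ = Real.exp ((Real.log n)^2 / Real.log 2 - (n:ℝ)^ε / K) := by
            rw [← Real.exp_add]; ring_nf
end

section
/- The graph X_{k,m} is balanced: its density (2m+1)(k−1)/(2(m+1)) is greater than or equal to the density of every subgraph of X_{k,m}. -/
open Finset

private lemma xkm_arith (k m a b c e : ℚ) (hm : 1 ≤ m) (ha0 : 0 ≤ a) (hb0 : 0 ≤ b)
    (hc0 : 0 ≤ c) (hca : c ≤ a) (hck : c ≤ k - 1) (hak : a ≤ k) (hbkm : b ≤ k * m)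
    (he : 2 * e + a ≤ a * a + 2 * (b * c)) :
    2 * (m + 1) * e ≤ (2 * m + 1) * (k - 1) * (a + b) := by
  nlinarith [mul_nonneg hb0 (sub_nonneg.2 hck), mul_nonneg hb0 (sub_nonneg.2 hca),
    mul_nonneg (sub_nonneg.2 hbkm) (sub_nonneg.2 hck),
    mul_nonneg (sub_nonneg.2 hbkm) (sub_nonneg.2 hca),
    mul_nonneg (sub_nonneg.2 hak) (sub_nonneg.2 hca),
    mul_nonneg (sub_nonneg.2 hak) (sub_nonneg.2 hck),
    mul_nonneg (sub_nonneg.2 hak) hb0,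
    mul_nonneg (sub_nonneg.2 hak) (sub_nonneg.2 hbkm),
    mul_nonneg (mul_nonneg (sub_nonneg.2 hak) (sub_nonneg.2 hca)) (sub_nonneg.2 hm),
    mul_nonneg ha0 (sub_nonneg.2 hck)]

/-- The graph `X_{k,m}`: vertices `u₁,…,u_k` (the left summand) forming a clique, together
with vertices `v_{j,l}` (the right summand), where `u_i` is adjacent to `v_{j,l}` iff
`i ≠ j`, and no two `v`'s are adjacent. -/
def Xkm (k m : ℕ) : SimpleGraph (Fin k ⊕ Fin k × Fin m) where
  Adj x y := (x.isLeft ∨ y.isLeft) ∧ Sum.elim id Prod.fst x ≠ Sum.elim id Prod.fst y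
  symm := by
    constructor
    rintro x y ⟨h1, h2⟩
    exact ⟨h1.symm, h2.symm⟩
  loopless := by constructor; rintro x ⟨_, h⟩; exact h rfl

/-- the graph of "left-left" edges of the induced subgraph on `V` -/
def leftG (k m : ℕ) (V : Set (Fin k ⊕ Fin k × Fin m)) : SimpleGraph (Fin k) where
  Adj i j := i ≠ j ∧ Sum.inl i ∈ V ∧ Sum.inl j ∈ V
  symm := by constructor; rintro i j ⟨h1, h2, h3⟩; exact ⟨h1.symm, h3, h2⟩
  loopless := ⟨fun i h => h.1 rfl⟩

private lemma leftG_adj (k m : ℕ) (V : Set (Fin k ⊕ Fin k × Fin m)) (i j : Fin k) :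
    (leftG k m V).Adj i j ↔ i ≠ j ∧ Sum.inl i ∈ V ∧ Sum.inl j ∈ V := Iff.rfl

/-- `X_{k,m}` is balanced: the density of every subgraph is at most the
density `(2m+1)(k-1)/(2(m+1))` of `X_{k,m}` itself. -/
theorem Xkm_balanced (k m : ℕ) (hk : 0 < k) (hm : 0 < m)
    (H : (Xkm k m).Subgraph) (hne : H.verts.Nonempty) :
    (H.edgeSet.ncard : ℚ) / (H.verts.ncard : ℚ) ≤
      ((2 * m + 1) * ((k : ℚ) - 1)) / (2 * (m + 1)) := by
  classical
  set V := H.verts with hV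
  set A : Finset (Fin k) := Finset.univ.filter (fun i => Sum.inl i ∈ V) with hA
  set B : Finset (Fin k × Fin m) := Finset.univ.filter (fun p => Sum.inr p ∈ V) with hB
  set a := A.card with ha
  set b := B.card with hb
  set c := min a (k - 1) with hc
  -- vertex count
  have hVcard : V.ncard = a + b := by
    rw [Set.ncard_eq_toFinset_card' V]
    have : V.toFinset = A.disjSum B := by
      ext x
      cases x <;> simp [hA, hB]
    rw [this, Finset.card_disjSum]
  -- the left graph
  set K := leftG k m V with hK
  have hKnbr : ∀ i : Fin k, K.neighborFinset i ⊆ A.erase i := by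
    intro i j hj
    rw [SimpleGraph.mem_neighborFinset, hK, leftG_adj] at hj
    obtain ⟨hne', h1, h2⟩ := hj
    exact Finset.mem_erase.2 ⟨fun h => hne' h.symm, by simp [hA, h2]⟩
  have hKdeg : ∑ i : Fin k, K.degree i ≤ a * (a - 1) := by
    have hz : ∀ i ∈ Finset.univ, i ∉ A → K.degree i = 0 := by
      intro i _ hiA
      have : K.neighborFinset i = ∅ := by
        refine Finset.eq_empty_of_forall_notMem (fun j hj => ?_)
        rw [SimpleGraph.mem_neighborFinset, hK, leftG_adj] at hj
        exact hiA (by simp [hA, hj.2.1])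
      simp [SimpleGraph.degree, this]
    calc ∑ i : Fin k, K.degree i = ∑ i ∈ A, K.degree i :=
          (Finset.sum_subset (Finset.subset_univ A) hz).symm
      _ ≤ A.card • (a - 1) := by
          refine Finset.sum_le_card_nsmul _ _ _ (fun i hi => ?_)
          calc K.degree i ≤ (A.erase i).card := Finset.card_le_card (hKnbr i)
            _ = a - 1 := Finset.card_erase_of_mem hi
      _ = a * (a - 1) := by rw [smul_eq_mul]
  have hKedges : 2 * K.edgeFinset.card ≤ a * (a - 1) := by
    rw [← SimpleGraph.sum_degrees_eq_twice_card_edges]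
    exact hKdeg
  -- the mixed edges
  set T : Finset ((Fin k × Fin m) × Fin k) :=
    B.biUnion (fun p => (A.erase p.1).image (fun i => (p, i))) with hT
  have hTcard : T.card ≤ b * c := by
    rw [hT, Finset.card_biUnion]
    · calc ∑ p ∈ B, ((A.erase p.1).image (fun i => (p, i))).card
          ≤ B.card • c := by
            refine Finset.sum_le_card_nsmul _ _ _ (fun p _ => ?_)
            rw [Finset.card_image_of_injective _
              (fun x y h => by simpa using h : Function.Injective (fun i => (p, i)))]
            refine le_min ?_ ?_
            · exact Finset.card_le_card (Finset.erase_subset _ _)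
            · calc (A.erase p.1).card ≤ (Finset.univ.erase p.1).card :=
                    Finset.card_le_card (Finset.erase_subset_erase _ (Finset.subset_univ _))
                _ = k - 1 := by rw [Finset.card_erase_of_mem (Finset.mem_univ _)]; simp
        _ = b * c := by rw [smul_eq_mul]
    · intro p hp q hq hpq
      simp only [Finset.disjoint_left, Finset.mem_image]
      rintro x ⟨i, -, rfl⟩ ⟨j, -, hj⟩
      exact hpq (congrArg Prod.fst hj).symm
  -- the edge set is covered
  set F1 : Finset (Sym2 (Fin k ⊕ Fin k × Fin m)) := K.edgeFinset.image (Sym2.map Sum.inl) with hF1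
  set F2 : Finset (Sym2 (Fin k ⊕ Fin k × Fin m)) :=
    T.image (fun q => s(Sum.inr q.1, Sum.inl q.2)) with hF2
  have hcover : H.edgeSet ⊆ ↑(F1 ∪ F2) := by
    intro z hz
    induction z using Sym2.ind with
    | _ x y =>
      rw [SimpleGraph.Subgraph.mem_edgeSet] at hz
      have hX := H.adj_sub hz
      have hx : x ∈ V := H.edge_vert hz
      have hy : y ∈ V := H.edge_vert hz.symm
      rw [Finset.mem_coe, Finset.mem_union]
      obtain ⟨hXl, hXne⟩ := hX
      match x, y with
      | Sum.inl i, Sum.inl j =>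
        left
        rw [hF1, Finset.mem_image]
        refine ⟨s(i, j), ?_, by rw [Sym2.map_pair_eq]⟩
        rw [SimpleGraph.mem_edgeFinset, SimpleGraph.mem_edgeSet, hK, leftG_adj]
        exact ⟨by simpa using hXne, hx, hy⟩
      | Sum.inl i, Sum.inr p =>
        right
        rw [hF2, Finset.mem_image]
        refine ⟨(p, i), ?_, Sym2.eq_swap⟩
        rw [hT, Finset.mem_biUnion]
        refine ⟨p, by simp [hB, hy], Finset.mem_image.2 ⟨i, ?_, rfl⟩⟩
        exact Finset.mem_erase.2 ⟨by simpa using hXne, by simp [hA, hx]⟩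
      | Sum.inr p, Sum.inl i =>
        right
        rw [hF2, Finset.mem_image]
        refine ⟨(p, i), ?_, rfl⟩
        rw [hT, Finset.mem_biUnion]
        refine ⟨p, by simp [hB, hx], Finset.mem_image.2 ⟨i, ?_, rfl⟩⟩
        refine Finset.mem_erase.2 ⟨?_, by simp [hA, hy]⟩
        intro h; exact hXne (by simp [h])
      | Sum.inr p, Sum.inr q => simp at hXl
  set e := H.edgeSet.ncard with he
  have hecard : e ≤ K.edgeFinset.card + T.card := by
    calc e ≤ (↑(F1 ∪ F2) : Set (Sym2 (Fin k ⊕ Fin k × Fin m))).ncard :=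
          Set.ncard_le_ncard hcover (Finset.finite_toSet _)
      _ = (F1 ∪ F2).card := Set.ncard_coe_finset _
      _ ≤ F1.card + F2.card := Finset.card_union_le _ _
      _ ≤ K.edgeFinset.card + T.card := by
          gcongr
          · exact Finset.card_image_le
          · exact Finset.card_image_le
  -- combine in ℕ
  have h2e : 2 * e + a ≤ a * a + 2 * (b * c) := by
    have haa : a * (a - 1) + a = a * a := by
      cases a with
      | zero => simp
      | succ n => simp [Nat.succ_sub_one]; ring
    linarith [hKedges, hTcard, hecard]
  -- pass to ℚ
  have hak : a ≤ k := by simpa using Finset.card_le_univ A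
  have hbkm : b ≤ k * m := by simpa using Finset.card_le_univ B
  have hv0 : 0 < V.ncard := (Set.ncard_pos (Set.toFinite V)).2 hne
  rw [hVcard] at hv0 ⊢
  have hvQ : (0 : ℚ) < ((a + b : ℕ) : ℚ) := by exact_mod_cast hv0
  rw [div_le_div_iff₀ hvQ (by positivity)]
  have hckQ : (c : ℚ) ≤ (k : ℚ) - 1 := by
    calc (c : ℚ) ≤ ((k - 1 : ℕ) : ℚ) := Nat.cast_le.2 (min_le_right _ _)
      _ = (k : ℚ) - 1 := by rw [Nat.cast_sub hk]; norm_num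
  have key := xkm_arith (k : ℚ) (m : ℚ) (a : ℚ) (b : ℚ) (c : ℚ) (e : ℚ)
    (by exact_mod_cast hm) (Nat.cast_nonneg a) (Nat.cast_nonneg b) (Nat.cast_nonneg c)
    (Nat.cast_le.2 (min_le_left _ _)) hckQ (Nat.cast_le.2 hak)
    (by exact_mod_cast hbkm) (by exact_mod_cast h2e)
  push_cast
  push_cast at key
  linarith [key]
end
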